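/- Let M be a real m×k matrix and P a real k×k projector (P² = P) whose kernel equals the kernel of M (i.e., P projects along ker M). Let f : ℝ^m × ℝ^n → ℝ^m be continuous and strongly monotone with respect to its first argument, and let r : ℝ^n → ℝ^m be continuous. Then there exists a continuous function g : ℝ^n → ℝ^k such that for all z ∈ ℝ^k and y ∈ ℝ^n: Mᵀ f(Mz, y) + Pᵀ r(y) = 0 if and only if Pz = g(y). -/

import Mathlib

/-!
Adding `(1 - P)ᵀ (1 - P) z` to `Mᵀ f (M z, y)` gives a map of `z` that is strongly monotone on
all of `ℝ^k`, since `ker M ∩ ker (1 - P) = 0`, and that agrees with `Mᵀ f (M z, y)` on `range P`,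
where `M (P z) = M z`. A continuous strongly monotone self-map of a finite-dimensional inner
product space is bijective: by induction on the dimension, solve along a unit vector `v` with the
intermediate value theorem; what remains on `v⊥` is again strongly monotone. So `g y` is the
unique solution of `Mᵀ f (M z, y) + (1 - P)ᵀ (1 - P) z = -Pᵀ r y`, and the equation of the theorem
at `z` is this one at `P z`. Strong monotonicity also bounds `‖g y - g y₀‖` by a residual that is
continuous in `y`, which makes `g` continuous.
-/

open scoped InnerProductSpace
open Filter Topology Module Function

section StronglyMonotone

variable {E : Type*} [NormedAddCommGroup E] [InnerProductSpace ℝ E]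

def StronglyMonotoneWith (c : ℝ) (F : E → E) : Prop :=
  ∀ x x', c * ‖x - x'‖ ^ 2 ≤ ⟪F x - F x', x - x'⟫_ℝ

namespace StronglyMonotoneWith

variable {c : ℝ} {F : E → E}

theorem mul_norm_sub_le (hF : StronglyMonotoneWith c F) (x x' : E) :
    c * ‖x - x'‖ ≤ ‖F x - F x'‖ := by
  rcases (norm_nonneg (x - x')).eq_or_lt with h | h
  · rw [← h, mul_zero]
    exact norm_nonneg _
  · refine le_of_mul_le_mul_right ?_ h
    calc c * ‖x - x'‖ * ‖x - x'‖ = c * ‖x - x'‖ ^ 2 := by ring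
      _ ≤ ⟪F x - F x', x - x'⟫_ℝ := hF x x'
      _ ≤ ‖F x - F x'‖ * ‖x - x'‖ := real_inner_le_norm _ _

theorem injective (hc : 0 < c) (hF : StronglyMonotoneWith c F) : Injective F := by
  intro x x' h
  have hle := hF.mul_norm_sub_le x x'
  rw [h, sub_self, norm_zero] at hle
  have : ‖x - x'‖ ≤ 0 := nonpos_of_mul_nonpos_right hle hc
  exact sub_eq_zero.mp (norm_le_zero_iff.mp this)

theorem continuous_of_apply_eq {Y : Type*} [TopologicalSpace Y] (hc : 0 < c)
    {F : Y → E → E} (hF : ∀ y, StronglyMonotoneWith c (F y))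
    (hFc : ∀ x, Continuous fun y => F y x) {g b : Y → E} (hb : Continuous b)
    (hg : ∀ y, F y (g y) = b y) : Continuous g := by
  refine continuous_iff_continuousAt.2 fun y₀ => ?_
  have hlim : Tendsto (fun y => c⁻¹ * ‖b y - F y (g y₀)‖) (𝓝 y₀) (𝓝 0) := by
    simpa [hg] using (((hb.sub (hFc (g y₀))).norm).const_mul c⁻¹).tendsto y₀
  refine tendsto_iff_norm_sub_tendsto_zero.2
    (squeeze_zero (fun _ => norm_nonneg _) (fun y => ?_) hlim)
  rw [le_inv_mul_iff₀ hc, ← hg y]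
  exact (hF y).mul_norm_sub_le _ _

theorem surjective_real {ψ : ℝ → ℝ} (hc : 0 < c) (hψ : StronglyMonotoneWith c ψ)
    (hψc : Continuous ψ) : Surjective ψ := by
  have hψ₀ (t : ℝ) : c * t ^ 2 ≤ t * (ψ t - ψ 0) := by simpa using hψ t 0
  refine hψc.surjective ?_ ?_
  · refine tendsto_atTop_mono' atTop ?_
      (tendsto_atTop_add_const_left _ (ψ 0) (tendsto_id.const_mul_atTop hc))
    filter_upwards [eventually_gt_atTop 0] with t ht
    dsimp only [id]
    nlinarith [hψ₀ t]
  · refine tendsto_atBot_mono' atBot ?_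
      (tendsto_atBot_add_const_left _ (ψ 0) (tendsto_id.const_mul_atBot hc))
    filter_upwards [eventually_lt_atBot 0] with t ht
    dsimp only [id]
    nlinarith [hψ₀ t]

theorem inner_apply_add_smul (hF : StronglyMonotoneWith c F) {v : E} (hv : ‖v‖ = 1) (w : E) :
    StronglyMonotoneWith c fun t : ℝ => ⟪F (w + t • v), v⟫_ℝ := by
  intro t s
  have hd : w + t • v - (w + s • v) = (t - s) • v := by rw [sub_smul]; abel
  have h := hF (w + t • v) (w + s • v)
  rw [hd, norm_smul, hv, mul_one, real_inner_smul_right, inner_sub_left] at h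
  simpa [mul_comm] using h

theorem orthogonalProjection_comp_add_smul (hc : 0 ≤ c) (hF : StronglyMonotoneWith c F) {v : E}
    {β : ℝ} {T : (ℝ ∙ v)ᗮ → ℝ} (hT : ∀ w, ⟪F (w + T w • v), v⟫_ℝ = β) :
    StronglyMonotoneWith c fun w : (ℝ ∙ v)ᗮ =>
      (ℝ ∙ v)ᗮ.orthogonalProjectionOnto (F (w + T w • v)) := by
  intro a a'
  set X : (ℝ ∙ v)ᗮ → E := fun w => w + T w • v
  have hXd : X a - X a' = ((a - a' : (ℝ ∙ v)ᗮ) : E) + (T a - T a') • v := by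
    simp only [X, Submodule.coe_sub, sub_smul]; abel
  have hperp : ⟪((a - a' : (ℝ ∙ v)ᗮ) : E), v⟫_ℝ = 0 :=
    Submodule.mem_orthogonal_singleton_iff_inner_left.1 (a - a').2
  have hFv : ⟪F (X a) - F (X a'), v⟫_ℝ = 0 := by rw [inner_sub_left, hT, hT, sub_self]
  have hnorm : ‖a - a'‖ ^ 2 ≤ ‖X a - X a'‖ ^ 2 := by
    rw [hXd, norm_add_sq_real, real_inner_smul_right, hperp, Submodule.coe_norm]
    nlinarith [sq_nonneg ‖(T a - T a') • v‖]
  calc c * ‖a - a'‖ ^ 2 ≤ c * ‖X a - X a'‖ ^ 2 := by gcongr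
    _ ≤ ⟪F (X a) - F (X a'), X a - X a'⟫_ℝ := hF _ _
    _ = _ := by
      rw [← map_sub, Submodule.inner_orthogonalProjectionOnto_eq_of_mem_right, hXd,
        inner_add_right, real_inner_smul_right, hFv, mul_zero, add_zero]

end StronglyMonotoneWith

theorem eq_of_inner_eq_of_orthogonalProjection_eq {v u b : E} (hv : ⟪u, v⟫_ℝ = ⟪b, v⟫_ℝ)
    (hK : (ℝ ∙ v)ᗮ.orthogonalProjectionOnto u = (ℝ ∙ v)ᗮ.orthogonalProjectionOnto b) :
    u = b := by
  have hmem : u - b ∈ (ℝ ∙ v)ᗮ := by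
    rw [Submodule.mem_orthogonal_singleton_iff_inner_left, inner_sub_left, hv, sub_self]
  have := Submodule.orthogonalProjectionOnto_mem_subspace_eq_self ⟨u - b, hmem⟩
  rw [map_sub, hK, sub_self] at this
  exact sub_eq_zero.mp (congrArg Subtype.val this).symm

theorem StronglyMonotoneWith.surjective [FiniteDimensional ℝ E] {c : ℝ} {F : E → E}
    (hc : 0 < c) (hF : StronglyMonotoneWith c F) (hFc : Continuous F) : Surjective F := by
  obtain ⟨n, hn⟩ : ∃ n, finrank ℝ E = n := ⟨_, rfl⟩
  induction n generalizing E with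
  | zero =>
    have : Subsingleton E := finrank_zero_iff.mp hn
    exact fun b => ⟨b, Subsingleton.elim _ _⟩
  | succ d ih =>
    intro b
    have : Nontrivial E := Module.nontrivial_of_finrank_pos (R := ℝ) (by omega)
    obtain ⟨v, hv⟩ := exists_norm_eq E zero_le_one
    have hv0 : v ≠ 0 := norm_ne_zero_iff.mp (hv ▸ one_ne_zero)
    have hK : finrank ℝ (ℝ ∙ v)ᗮ = d := by
      have := (ℝ ∙ v).finrank_add_finrank_orthogonal
      rw [finrank_span_singleton hv0] at this
      omega
    choose T hT using fun w : (ℝ ∙ v)ᗮ =>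
      (hF.inner_apply_add_smul hv w).surjective_real hc (by fun_prop) ⟪b, v⟫_ℝ
    have hTc : Continuous T := StronglyMonotoneWith.continuous_of_apply_eq hc
      (fun w : (ℝ ∙ v)ᗮ => hF.inner_apply_add_smul hv w) (fun t => by fun_prop) continuous_const hT
    obtain ⟨a, ha⟩ := ih (hF.orthogonalProjection_comp_add_smul hc.le hT) (by fun_prop) hK
      ((ℝ ∙ v)ᗮ.orthogonalProjectionOnto b)
    exact ⟨_, eq_of_inner_eq_of_orthogonalProjection_eq (hT a) ha⟩

end StronglyMonotone

open LinearMap (adjoint ker)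

theorem exists_pos_mul_norm_sq_le_add_of_ker_inf_eq_bot {E V W : Type*}
    [NormedAddCommGroup E] [NormedSpace ℝ E] [FiniteDimensional ℝ E]
    [NormedAddCommGroup V] [NormedSpace ℝ V] [NormedAddCommGroup W] [NormedSpace ℝ W]
    (A : E →ₗ[ℝ] V) (B : E →ₗ[ℝ] W) (h : ker A ⊓ ker B = ⊥) :
    ∃ α > 0, ∀ x, α * ‖x‖ ^ 2 ≤ ‖A x‖ ^ 2 + ‖B x‖ ^ 2 := by
  obtain ⟨K, hK, hanti⟩ := (A.prod B).exists_antilipschitzWith (by rwa [LinearMap.ker_prod])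
  refine ⟨((K : ℝ) ^ 2)⁻¹, by positivity, fun x => ?_⟩
  have hx : ‖x‖ ≤ K * max ‖A x‖ ‖B x‖ := by simpa [Prod.dist_eq] using hanti.le_mul_dist x 0
  have hmax : max ‖A x‖ ‖B x‖ ^ 2 ≤ ‖A x‖ ^ 2 + ‖B x‖ ^ 2 := by
    rcases max_cases ‖A x‖ ‖B x‖ with ⟨h, _⟩ | ⟨h, _⟩ <;> rw [h] <;>
      nlinarith [sq_nonneg ‖A x‖, sq_nonneg ‖B x‖]
  rw [inv_mul_le_iff₀ (by positivity)]
  calc ‖x‖ ^ 2 ≤ (K * max ‖A x‖ ‖B x‖) ^ 2 := pow_le_pow_left₀ (norm_nonneg _) hx 2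
    _ = K ^ 2 * max ‖A x‖ ‖B x‖ ^ 2 := mul_pow _ _ _
    _ ≤ K ^ 2 * (‖A x‖ ^ 2 + ‖B x‖ ^ 2) := by gcongr

section Projection

variable {R M N : Type*} [Ring R] [AddCommGroup M] [Module R M] [AddCommGroup N] [Module R N]
  {A : M →ₗ[R] N} {p : M →ₗ[R] M}

theorem apply_projection_eq_of_ker_eq (hp : IsIdempotentElem p) (hker : ker p = ker A) (z : M) :
    A (p z) = A z := by
  have : (1 - p) z ∈ ker A := hker ▸ LinearMap.congr_fun hp.mul_one_sub_self z
  rwa [LinearMap.mem_ker, LinearMap.sub_apply, Module.End.one_apply, map_sub, sub_eq_zero,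
    eq_comm] at this

theorem ker_inf_ker_one_sub_eq_bot (hker : ker p = ker A) : ker A ⊓ ker (1 - p) = ⊥ := by
  refine (Submodule.eq_bot_iff _).2 fun x hx => ?_
  obtain ⟨hA, hq⟩ := Submodule.mem_inf.1 hx
  rw [LinearMap.mem_ker, LinearMap.sub_apply, Module.End.one_apply, sub_eq_zero] at hq
  rwa [← hker, LinearMap.mem_ker, ← hq] at hA

end Projection

section Augmented

variable {E V Y : Type*} [NormedAddCommGroup E] [InnerProductSpace ℝ E] [FiniteDimensional ℝ E]
  [NormedAddCommGroup V] [InnerProductSpace ℝ V] [FiniteDimensional ℝ V]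
  {A : E →ₗ[ℝ] V} {p : E →ₗ[ℝ] E}

noncomputable def augmentedMap (A : E →ₗ[ℝ] V) (p : E →ₗ[ℝ] E) (f : V × Y → V) (y : Y) (z : E) :
    E :=
  adjoint A (f (A z, y)) + adjoint (1 - p) ((1 - p) z)

theorem augmentedMap_apply_projection (hp : IsIdempotentElem p) (hker : ker p = ker A)
    (f : V × Y → V) (y : Y) (z : E) :
    augmentedMap A p f y (p z) = adjoint A (f (A z, y)) := by
  rw [augmentedMap, apply_projection_eq_of_ker_eq hp hker,
    ← Module.End.mul_apply (1 - p), hp.one_sub_mul_self, LinearMap.zero_apply, map_zero, add_zero]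

theorem exists_stronglyMonotoneWith_augmentedMap (hker : ker p = ker A) {f : V × Y → V}
    {c : ℝ} (hc : 0 < c) (hf : ∀ y, StronglyMonotoneWith c fun x => f (x, y)) :
    ∃ α > 0, ∀ y, StronglyMonotoneWith α (augmentedMap A p f y) := by
  obtain ⟨α, hα, hcoer⟩ :=
    exists_pos_mul_norm_sq_le_add_of_ker_inf_eq_bot A (1 - p) (ker_inf_ker_one_sub_eq_bot hker)
  refine ⟨min c 1 * α, by positivity, fun y z z' => ?_⟩
  have hinner : ⟪augmentedMap A p f y z - augmentedMap A p f y z', z - z'⟫_ℝ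
      = ⟪f (A z, y) - f (A z', y), A z - A z'⟫_ℝ + ‖(1 - p) (z - z')‖ ^ 2 := by
    rw [augmentedMap, augmentedMap, add_sub_add_comm, ← map_sub, ← map_sub, ← map_sub,
      inner_add_left, LinearMap.adjoint_inner_left, LinearMap.adjoint_inner_left,
      real_inner_self_eq_norm_sq, map_sub A]
  rw [hinner]
  calc min c 1 * α * ‖z - z'‖ ^ 2
      ≤ min c 1 * (‖A (z - z')‖ ^ 2 + ‖(1 - p) (z - z')‖ ^ 2) := by
        rw [mul_assoc]; gcongr; exact hcoer _
    _ ≤ c * ‖A z - A z'‖ ^ 2 + ‖(1 - p) (z - z')‖ ^ 2 := by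
        rw [map_sub, mul_add]
        gcongr
        · exact min_le_left c 1
        · exact mul_le_of_le_one_left (sq_nonneg _) (min_le_right c 1)
    _ ≤ _ := by gcongr; exact hf y (A z) (A z')

theorem exists_continuous_forall_adjoint_add_eq_zero_iff [TopologicalSpace Y]
    (hp : IsIdempotentElem p) (hker : ker p = ker A) {f : V × Y → V} (hf : Continuous f)
    {c : ℝ} (hc : 0 < c) (hmono : ∀ y, StronglyMonotoneWith c fun x => f (x, y))
    {r : Y → E} (hr : Continuous r) :
    ∃ g : Y → E, Continuous g ∧
      ∀ z y, adjoint A (f (A z, y)) + adjoint p (r y) = 0 ↔ p z = g y := by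
  obtain ⟨α, hα, hF⟩ := exists_stronglyMonotoneWith_augmentedMap hker hc hmono
  have hFc (y : Y) : Continuous (augmentedMap A p f y) := by
    unfold augmentedMap
    fun_prop
  choose g hg using fun y => (hF y).surjective hα (hFc y) (-adjoint p (r y))
  refine ⟨g, StronglyMonotoneWith.continuous_of_apply_eq hα hF (fun z => ?_) (by fun_prop) hg,
    fun z y => ?_⟩
  · unfold augmentedMap
    fun_prop
  · rw [add_eq_zero_iff_eq_neg, ← augmentedMap_apply_projection hp hker, ← hg y,
      ((hF y).injective hα).eq_iff]

end Augmented

/-- Let `M ∈ ℝ^{m×k}` and let `P ∈ ℝ^{k×k}` be a projector along `ker M`. If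
`f : ℝ^m × ℝ^n → ℝ^m` is continuous and strongly monotone with respect to its first
argument and `r : ℝ^n → ℝ^m` is continuous, then there is a continuous `g : ℝ^n → ℝ^k`
such that `Mᵀ f (M z, y) + Pᵀ r y = 0` if and only if `P z = g y`. -/
theorem projector_implicit_solution_form {m n k : ℕ}
    (M : Matrix (Fin m) (Fin k) ℝ) (P : Matrix (Fin k) (Fin k) ℝ)
    (hP_proj : P * P = P)
    (hP_ker : ∀ x : EuclideanSpace ℝ (Fin k),
      P.toEuclideanLin x = 0 ↔ M.toEuclideanLin x = 0)
    (f : EuclideanSpace ℝ (Fin m) × EuclideanSpace ℝ (Fin n) → EuclideanSpace ℝ (Fin m))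
    (hf_cont : Continuous f)
    (hf_mono : ∃ c : ℝ, 0 < c ∧ ∀ y : EuclideanSpace ℝ (Fin n),
      ∀ x x' : EuclideanSpace ℝ (Fin m),
        ⟪f (x, y) - f (x', y), x - x'⟫_ℝ ≥ c * ‖x - x'‖ ^ 2)
    (r : EuclideanSpace ℝ (Fin n) → EuclideanSpace ℝ (Fin k)) (hr_cont : Continuous r) :
    ∃ g : EuclideanSpace ℝ (Fin n) → EuclideanSpace ℝ (Fin k), Continuous g ∧
      ∀ (z : EuclideanSpace ℝ (Fin k)) (y : EuclideanSpace ℝ (Fin n)),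
        M.transpose.toEuclideanLin (f (M.toEuclideanLin z, y))
            + P.transpose.toEuclideanLin (r y) = 0 ↔
          P.toEuclideanLin z = g y := by
  obtain ⟨c, hc, hmono⟩ := hf_mono
  have htranspose {a b : ℕ} (B : Matrix (Fin a) (Fin b) ℝ) :
      B.transpose.toEuclideanLin = adjoint B.toEuclideanLin := by
    rw [← Matrix.conjTranspose_eq_transpose_of_trivial,
      Matrix.toEuclideanLin_conjTranspose_eq_adjoint]
  simp only [htranspose]
  refine exists_continuous_forall_adjoint_add_eq_zero_iff ?_ (Submodule.ext hP_ker) hf_cont hc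
    hmono hr_cont
  rw [IsIdempotentElem, Module.End.mul_eq_comp, ← Matrix.toLpLin_mul_same, hP_proj]
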